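/- Let A be an m×d matrix with ‖A‖_op = 1 and δ_{2s} < 1/(2+2η)² for some η ∈ [0,1]. Let x* ∈ ℝ^d, y = Ax* + e, ẽ = y − A H_s(x*), and let (x^t) be the ILAT iterates: a^t = x^{t-1} + A*(y − Ax^{t-1}) and x^t the s-sparse coordinate projection of a^t closest to a^t − η∇C(a^t). Then ‖H_s(x*) − x^t‖₂ ≤ ρ‖H_s(x*) − x^{t-1}‖₂ + (2+8η)‖ẽ‖₂, where ρ = (2+2η)√δ_{2s} < 1. -/

import Mathlib

/-!
With `P = AᵀA` and `w = x^{t-1} - H_s(x*)`, the Landweber step gives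
`a^t - H_s(x*) = (I - P) w + Aᵀ ẽ` and `Aᵀ (y - A a^t) = (I - P) Aᵀ ẽ - P (I - P) w`.
Since `‖A‖ = 1` we have `0 ≤ P ≤ I`, so `‖(I - P) w‖² ≤ ‖w‖² - ‖A w‖² ≤ δ ‖w‖²` by the lower
RIP bound for the `2s`-sparse `w`, and `‖P (I - P) w‖ ≤ (√δ / 2) ‖w‖`.
The thresholding step is compared with the projection of `a^t` onto a size-`s` support containing
that of `H_s(x*)`, which gives `‖H_s(x*) - x^t‖ ≤ 2 ‖a^t - H_s(x*)‖ + 4η ‖Aᵀ (y - A a^t)‖`;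
the two bounds combine to `(2 + 2η) √δ ‖w‖ + (2 + 4η) ‖ẽ‖`.
-/

open Matrix MeasureTheory ProbabilityTheory Filter
open scoped RealInnerProductSpace NNReal

/-- Operator norm of a matrix with respect to Euclidean norms. -/
noncomputable def opNorm {m d : ℕ} (A : Matrix (Fin m) (Fin d) ℝ) : ℝ :=
  ‖LinearMap.toContinuousLinearMap (Matrix.toEuclideanLin A)‖

/-- Matrix-vector multiplication as a map between Euclidean spaces. -/
noncomputable def Mv {m d : ℕ} (A : Matrix (Fin m) (Fin d) ℝ)
    (x : EuclideanSpace ℝ (Fin d)) : EuclideanSpace ℝ (Fin m) :=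
  Matrix.toEuclideanLin A x

/-- A vector is `s`-sparse if it has at most `s` nonzero entries. -/
def Sparse {d : ℕ} (s : ℕ) (x : EuclideanSpace ℝ (Fin d)) : Prop :=
  Set.ncard {i | x i ≠ 0} ≤ s

/-- Coordinate projection onto the index set `S`. -/
noncomputable def proj {d : ℕ} (S : Finset (Fin d)) (z : EuclideanSpace ℝ (Fin d)) :
    EuclideanSpace ℝ (Fin d) :=
  WithLp.toLp 2 (fun i => if i ∈ S then z i else 0)


section PositiveContraction

variable {E : Type*} [NormedAddCommGroup E] [InnerProductSpace ℝ E] {P : E →ₗ[ℝ] E}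

/- For symmetric `P`, the hypothesis `∀ u, ‖P u‖ ^ 2 ≤ ⟪P u, u⟫` says `P ^ 2 ≤ P`, i.e. `0 ≤ P ≤ 1`. -/
lemma norm_sub_apply_sq_le (hP : ∀ u, ‖P u‖ ^ 2 ≤ ⟪P u, u⟫) (v : E) :
    ‖v - P v‖ ^ 2 ≤ ‖v‖ ^ 2 - ⟪P v, v⟫ := by
  rw [norm_sub_sq_real, real_inner_comm]
  linarith [hP v]

lemma inner_apply_self_le_norm_sq (hP : ∀ u, ‖P u‖ ^ 2 ≤ ⟪P u, u⟫) (u : E) :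
    ⟪P u, u⟫ ≤ ‖u‖ ^ 2 := by
  nlinarith [hP u, real_inner_le_norm (P u) u, norm_nonneg (P u), norm_nonneg u]

/-- Spectrally `4 λ² (1 - λ)² ≤ 1 - λ` on `[0, 1]`; the gap is `⟪(1 - P) u, u⟫` for
`u = v - 2 P v`. -/
lemma four_mul_norm_apply_sub_apply_sq_le (hPs : P.IsSymmetric)
    (hP : ∀ u, ‖P u‖ ^ 2 ≤ ⟪P u, u⟫) (v : E) :
    4 * ‖P (v - P v)‖ ^ 2 ≤ ⟪v - P v, v⟫ := by
  have hgap : ⟪v - P v, v⟫ - 4 * ⟪P (v - P v), v - P v⟫ =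
      ‖v - (2 : ℝ) • P v‖ ^ 2 - ⟪P (v - (2 : ℝ) • P v), v - (2 : ℝ) • P v⟫ := by
    have hsym : ⟪P (P v), v⟫ = ⟪P v, P v⟫ := hPs (P v) v
    rw [← real_inner_self_eq_norm_sq]
    simp only [map_sub, map_smul, inner_sub_left, inner_sub_right, inner_smul_left,
      inner_smul_right, hsym, real_inner_comm v (P v), real_inner_comm (P v) (P (P v)),
      RCLike.conj_to_real]
    ring
  nlinarith [hP (v - P v), inner_apply_self_le_norm_sq hP (v - (2 : ℝ) • P v)]

end PositiveContraction

lemma le_sqrt_mul_of_sq_le {a b c : ℝ} (hc : 0 ≤ c) (h : a ^ 2 ≤ b * c ^ 2) : a ≤ √b * c := by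
  rw [← Real.sqrt_sq hc, ← Real.sqrt_mul' _ (sq_nonneg c)]
  exact (le_abs_self a).trans (Real.abs_le_sqrt h)

section Contraction

open ContinuousLinearMap

variable {E F : Type*} [NormedAddCommGroup E] [InnerProductSpace ℝ E] [CompleteSpace E]
  [NormedAddCommGroup F] [InnerProductSpace ℝ F] [CompleteSpace F] {T : E →L[ℝ] F}

lemma norm_adjoint_apply_le (hT : ‖T‖ ≤ 1) (u : F) : ‖adjoint T u‖ ≤ ‖u‖ := by
  calc ‖adjoint T u‖ ≤ ‖adjoint T‖ * ‖u‖ := le_opNorm _ _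
    _ ≤ ‖u‖ := by
      rw [LinearIsometryEquiv.norm_map]
      exact mul_le_of_le_one_left (norm_nonneg u) hT

lemma inner_adjoint_comp_self_apply (v : E) : ⟪(adjoint T ∘L T) v, v⟫ = ‖T v‖ ^ 2 := by
  rw [ContinuousLinearMap.comp_apply, adjoint_inner_left, real_inner_self_eq_norm_sq]

lemma norm_adjoint_comp_self_apply_sq_le (hT : ‖T‖ ≤ 1) (v : E) :
    ‖(adjoint T ∘L T) v‖ ^ 2 ≤ ⟪(adjoint T ∘L T) v, v⟫ := by
  rw [inner_adjoint_comp_self_apply]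
  exact pow_le_pow_left₀ (norm_nonneg _) (norm_adjoint_apply_le hT (T v)) 2

lemma norm_sub_adjoint_comp_self_apply_le {δ : ℝ} (hT : ‖T‖ ≤ 1) {w : E}
    (hw : (1 - δ) * ‖w‖ ^ 2 ≤ ‖T w‖ ^ 2) : ‖w - (adjoint T ∘L T) w‖ ≤ √δ * ‖w‖ := by
  have key := norm_sub_apply_sq_le (P := (adjoint T ∘L T : E →ₗ[ℝ] E))
    (norm_adjoint_comp_self_apply_sq_le hT) w
  simp only [coe_coe, inner_adjoint_comp_self_apply] at key
  exact le_sqrt_mul_of_sq_le (norm_nonneg w) (by linarith)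

lemma norm_adjoint_comp_self_apply_sub_le {δ : ℝ} (hT : ‖T‖ ≤ 1) {w : E}
    (hw : (1 - δ) * ‖w‖ ^ 2 ≤ ‖T w‖ ^ 2) :
    ‖(adjoint T ∘L T) (w - (adjoint T ∘L T) w)‖ ≤ √δ / 2 * ‖w‖ := by
  have key := four_mul_norm_apply_sub_apply_sq_le (P := (adjoint T ∘L T : E →ₗ[ℝ] E))
    (isPositive_adjoint_comp_self T).isSymmetric (norm_adjoint_comp_self_apply_sq_le hT) w
  simp only [coe_coe, inner_sub_left, inner_adjoint_comp_self_apply,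
    real_inner_self_eq_norm_sq] at key
  have hsqrt : 2 * ‖(adjoint T ∘L T) (w - (adjoint T ∘L T) w)‖ ≤ √δ * ‖w‖ :=
    le_sqrt_mul_of_sq_le (norm_nonneg w) (by linarith)
  linarith

lemma landweber_sub_eq (x h : E) (y : F) :
    x + adjoint T (y - T x) - h =
      (x - h) - (adjoint T ∘L T) (x - h) + adjoint T (y - T h) := by
  simp only [ContinuousLinearMap.comp_apply, map_sub]
  abel

lemma adjoint_landweber_residual_eq (x h : E) (y : F) :
    adjoint T (y - T (x + adjoint T (y - T x))) =
      adjoint T (y - T h) - (adjoint T ∘L T) (adjoint T (y - T h)) -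
        (adjoint T ∘L T) ((x - h) - (adjoint T ∘L T) (x - h)) := by
  rw [show x + adjoint T (y - T x) = h + (x + adjoint T (y - T x) - h) by abel,
    landweber_sub_eq]
  simp only [ContinuousLinearMap.comp_apply, map_sub, map_add]
  abel

variable {δ : ℝ} {x h : E}

lemma norm_landweber_sub_le (hT : ‖T‖ ≤ 1) (hw : (1 - δ) * ‖x - h‖ ^ 2 ≤ ‖T (x - h)‖ ^ 2)
    (y : F) : ‖x + adjoint T (y - T x) - h‖ ≤ √δ * ‖x - h‖ + ‖y - T h‖ := by
  rw [landweber_sub_eq]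
  exact (norm_add_le _ _).trans
    (add_le_add (norm_sub_adjoint_comp_self_apply_le hT hw) (norm_adjoint_apply_le hT _))

lemma norm_adjoint_landweber_residual_le (hT : ‖T‖ ≤ 1)
    (hw : (1 - δ) * ‖x - h‖ ^ 2 ≤ ‖T (x - h)‖ ^ 2) (y : F) :
    ‖adjoint T (y - T (x + adjoint T (y - T x)))‖ ≤ √δ / 2 * ‖x - h‖ + ‖y - T h‖ := by
  set z := adjoint T (y - T h)
  have hz : ‖z - (adjoint T ∘L T) z‖ ≤ ‖y - T h‖ := by
    have := norm_sub_adjoint_comp_self_apply_le (δ := 1) hT (w := z) (by simp)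
    rw [Real.sqrt_one, one_mul] at this
    exact this.trans (norm_adjoint_apply_le hT _)
  rw [adjoint_landweber_residual_eq x h]
  have := norm_sub_le (z - (adjoint T ∘L T) z)
    ((adjoint T ∘L T) ((x - h) - (adjoint T ∘L T) (x - h)))
  linarith [norm_adjoint_comp_self_apply_sub_le hT hw]

end Contraction

lemma norm_sub_le_of_closer {E : Type*} [SeminormedAddCommGroup E] {h a b x p : E}
    (hx : ‖x - b‖ ≤ ‖p - b‖) (hp : ‖p - a‖ ≤ ‖h - a‖) :
    ‖h - x‖ ≤ 2 * ‖h - a‖ + 2 * ‖a - b‖ := by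
  have := norm_sub_le_norm_sub_add_norm_sub h a x
  have := norm_sub_le_norm_sub_add_norm_sub a b x
  have := norm_sub_le_norm_sub_add_norm_sub p a b
  rw [norm_sub_rev b x] at *
  linarith

lemma mul_sqrt_lt_one {c δ : ℝ} (hc : 0 < c) (hδ : δ < 1 / c ^ 2) : c * √δ < 1 := by
  have : √δ < 1 / c := (Real.sqrt_lt' (by positivity)).2 (by rwa [div_pow, one_pow])
  calc c * √δ < c * (1 / c) := by gcongr
    _ = 1 := mul_one_div_cancel hc.ne'

section SparseVectors

variable {d : ℕ}

lemma sparse_zero (s : ℕ) : Sparse s (0 : EuclideanSpace ℝ (Fin d)) := by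
  simp [Sparse]

lemma Sparse.sub {s₁ s₂ : ℕ} {u v : EuclideanSpace ℝ (Fin d)} (hu : Sparse s₁ u)
    (hv : Sparse s₂ v) : Sparse (s₁ + s₂) (u - v) := by
  have hsub : {i | (u - v) i ≠ 0} ⊆ {i | u i ≠ 0} ∪ {i | v i ≠ 0} := by
    intro i hi
    by_contra hcon
    simp_all
  calc Set.ncard {i | (u - v) i ≠ 0}
      ≤ Set.ncard ({i | u i ≠ 0} ∪ {i | v i ≠ 0}) := Set.ncard_le_ncard hsub
    _ ≤ Set.ncard {i | u i ≠ 0} + Set.ncard {i | v i ≠ 0} := Set.ncard_union_le _ _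
    _ ≤ s₁ + s₂ := Nat.add_le_add hu hv

lemma sparse_proj (S : Finset (Fin d)) (z : EuclideanSpace ℝ (Fin d)) :
    Sparse S.card (proj S z) := by
  have hsub : {i | proj S z i ≠ 0} ⊆ S := by
    intro i hi
    by_contra hcon
    simp_all [proj]
  exact (Set.ncard_le_ncard hsub).trans (Set.ncard_coe_finset S).le

lemma Sparse.exists_card_eq_of_le {s : ℕ} {h : EuclideanSpace ℝ (Fin d)} (hh : Sparse s h)
    (hs : s ≤ d) : ∃ S : Finset (Fin d), S.card = s ∧ ∀ i ∉ S, h i = 0 := by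
  classical
  have hsupp : (Finset.univ.filter fun i => h i ≠ 0).card ≤ s := by
    rwa [← Set.ncard_coe_finset, Finset.coe_filter_univ]
  obtain ⟨S, hsubS, hS⟩ := Finset.exists_superset_card_eq hsupp (by simpa using hs)
  refine ⟨S, hS, fun i hi => ?_⟩
  by_contra hne
  exact hi (hsubS (by simpa using hne))

lemma norm_proj_sub_le {S : Finset (Fin d)} (z : EuclideanSpace ℝ (Fin d))
    {h : EuclideanSpace ℝ (Fin d)} (hS : ∀ i ∉ S, h i = 0) : ‖proj S z - z‖ ≤ ‖h - z‖ := by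
  rw [EuclideanSpace.norm_eq, EuclideanSpace.norm_eq]
  gcongr with i
  by_cases hi : i ∈ S
  · simp [proj, hi]
  · simp [proj, hi, hS i hi]

end SparseVectors

lemma mv_eq_toContinuousLinearMap {m d : ℕ} (A : Matrix (Fin m) (Fin d) ℝ) :
    Mv A = LinearMap.toContinuousLinearMap (Matrix.toEuclideanLin A) := rfl

lemma mv_transpose_eq_adjoint {m d : ℕ} (A : Matrix (Fin m) (Fin d) ℝ) :
    Mv Aᵀ =
      ContinuousLinearMap.adjoint (LinearMap.toContinuousLinearMap (Matrix.toEuclideanLin A)) := by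
  rw [← LinearMap.adjoint_toContinuousLinearMap,
    ← Matrix.toEuclideanLin_conjTranspose_eq_adjoint, Matrix.conjTranspose_eq_transpose_of_trivial]
  rfl

theorem stmt10_general {m d s : ℕ} (A : Matrix (Fin m) (Fin d) ℝ) (hA : opNorm A = 1)
    (η : ℝ) (hη0 : 0 ≤ η)
    (δ : ℝ)
    (hRIP : ∀ v : EuclideanSpace ℝ (Fin d), Sparse (2 * s) v →
      (1 - δ) * ‖v‖ ^ 2 ≤ ‖Mv A v‖ ^ 2 ∧ ‖Mv A v‖ ^ 2 ≤ (1 + δ) * ‖v‖ ^ 2)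
    (hδ : δ < 1 / (2 + 2 * η) ^ 2)
    (y : EuclideanSpace ℝ (Fin m))
    (h : EuclideanSpace ℝ (Fin d)) (hh : Sparse s h)
    (et : EuclideanSpace ℝ (Fin m)) (het : et = y - Mv A h)
    (x a : ℕ → EuclideanSpace ℝ (Fin d)) (hx0 : x 0 = 0)
    (ha : ∀ t : ℕ, a (t + 1) = x t + Mv Aᵀ (y - Mv A (x t)))
    (hstep : ∀ t : ℕ, ∃ Ω : Finset (Fin d), Ω.card = s ∧ x (t + 1) = proj Ω (a (t + 1)) ∧
      ∀ Ω' : Finset (Fin d), Ω'.card = s →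
        ‖x (t + 1) - (a (t + 1) - η • ((-2 : ℝ) • Mv Aᵀ (y - Mv A (a (t + 1)))))‖ ≤
        ‖proj Ω' (a (t + 1)) - (a (t + 1) - η • ((-2 : ℝ) • Mv Aᵀ (y - Mv A (a (t + 1)))))‖) :
    (2 + 2 * η) * Real.sqrt δ < 1 ∧
    ∀ t : ℕ, ‖h - x (t + 1)‖ ≤
      (2 + 2 * η) * Real.sqrt δ * ‖h - x t‖ + (2 + 8 * η) * ‖et‖ := by
  refine ⟨mul_sqrt_lt_one (by linarith) hδ, fun t => ?_⟩
  have hsparse : ∀ t, Sparse s (x t)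
    | 0 => hx0 ▸ sparse_zero s
    | t + 1 => by
      obtain ⟨Ω, rfl, hx, -⟩ := hstep t
      exact hx ▸ sparse_proj Ω _
  obtain ⟨Ω, hΩ, -, hclosest⟩ := hstep t
  obtain ⟨S, hS, hhS⟩ := hh.exists_card_eq_of_le (by simpa [hΩ] using Ω.card_le_univ)
  have hRIPw := (hRIP _ (two_mul s ▸ (hsparse t).sub hh)).1
  simp only [mv_transpose_eq_adjoint] at hclosest ha
  simp only [mv_eq_toContinuousLinearMap] at hclosest ha het hRIPw
  have hthreshold := norm_sub_le_of_closer (hclosest S hS) (norm_proj_sub_le (a (t + 1)) hhS)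
  have ha_sub := norm_landweber_sub_le hA.le hRIPw y
  have hgrad := norm_adjoint_landweber_residual_le hA.le hRIPw y
  rw [← ha, ← het] at ha_sub hgrad
  rw [sub_sub_cancel, smul_smul, norm_smul, norm_mul, norm_neg, Real.norm_two,
    Real.norm_of_nonneg hη0, norm_sub_rev h (a (t + 1))] at hthreshold
  rw [norm_sub_rev h (x t)]
  linarith [mul_le_mul_of_nonneg_left hgrad hη0, mul_nonneg hη0 (norm_nonneg et)]

theorem stmt10 {m d s : ℕ} (A : Matrix (Fin m) (Fin d) ℝ) (hA : opNorm A = 1)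
    (η : ℝ) (hη0 : 0 ≤ η) (hη1 : η ≤ 1)
    (δ : ℝ) (hδ0 : 0 ≤ δ)
    (hRIP : ∀ v : EuclideanSpace ℝ (Fin d), Sparse (2 * s) v →
      (1 - δ) * ‖v‖ ^ 2 ≤ ‖Mv A v‖ ^ 2 ∧ ‖Mv A v‖ ^ 2 ≤ (1 + δ) * ‖v‖ ^ 2)
    (hδ : δ < 1 / (2 + 2 * η) ^ 2)
    (xs : EuclideanSpace ℝ (Fin d)) (e : EuclideanSpace ℝ (Fin m))
    (y : EuclideanSpace ℝ (Fin m)) (hy : y = Mv A xs + e)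
    (h : EuclideanSpace ℝ (Fin d)) (hh : Sparse s h)
    (hbest : ∀ w : EuclideanSpace ℝ (Fin d), Sparse s w → ‖xs - h‖ ≤ ‖xs - w‖)
    (et : EuclideanSpace ℝ (Fin m)) (het : et = y - Mv A h)
    (x a : ℕ → EuclideanSpace ℝ (Fin d)) (hx0 : x 0 = 0)
    (ha : ∀ t : ℕ, a (t + 1) = x t + Mv Aᵀ (y - Mv A (x t)))
    (hstep : ∀ t : ℕ, ∃ Ω : Finset (Fin d), Ω.card = s ∧ x (t + 1) = proj Ω (a (t + 1)) ∧
      ∀ Ω' : Finset (Fin d), Ω'.card = s →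
        ‖x (t + 1) - (a (t + 1) - η • ((-2 : ℝ) • Mv Aᵀ (y - Mv A (a (t + 1)))))‖ ≤
        ‖proj Ω' (a (t + 1)) - (a (t + 1) - η • ((-2 : ℝ) • Mv Aᵀ (y - Mv A (a (t + 1)))))‖) :
    (2 + 2 * η) * Real.sqrt δ < 1 ∧
    ∀ t : ℕ, ‖h - x (t + 1)‖ ≤
      (2 + 2 * η) * Real.sqrt δ * ‖h - x t‖ + (2 + 8 * η) * ‖et‖ :=
  stmt10_general A hA η hη0 δ hRIP hδ y h hh et het x a hx0 ha hstep
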